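/- arXiv:math/9409231 — 2 statements merged into one kernel-verified Lean document; each statement's English description precedes it below -/
import Mathlib

section
/- Evaluation with shifted parameter: for integers m ≥ 0 and p, S_m((q^{1/2} + q^{-1/2})/2; q^{1/2 - p}, q^{1/2} | q) = q^{-m/2} (q^{1-p};q)_m. In particular this equals (q;q)_m q^{-m/2} if p = 0, equals 0 if 0 < p ≤ m, and equals (q^{1-p};q)_m q^{-m/2} if p > m. -/
/-- The q-shifted factorial `(a;q)_k`. -/
noncomputable def qp (q a : ℂ) (k : ℕ) : ℂ := ∏ i ∈ Finset.range k, (1 - a * q ^ i)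

/-- The Al-Salam–Chihara polynomial `S_n(x; a, b | q)` at `x = (ξ + ξ⁻¹)/2`. -/
noncomputable def ASC (q a b ξ : ℂ) (n : ℕ) : ℂ :=
  a ^ (-(n : ℤ)) * qp q (a * b) n *
    ∑ k ∈ Finset.range (n + 1),
      qp q ((q : ℂ) ^ (-(n : ℤ))) k * qp q (a * ξ) k * qp q (a / ξ) k /
        (qp q q k * qp q (a * b) k) * q ^ k

lemma qp_succ (q a : ℂ) (k : ℕ) : qp q a (k+1) = qp q a k * (1 - a * q ^ k) :=
  Finset.prod_range_succ _ _

lemma qp_succ' (q a : ℂ) (k : ℕ) : qp q a (k+1) = (1 - a) * qp q (a*q) k := by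
  simp only [qp, Finset.prod_range_succ', pow_zero, mul_one]
  rw [mul_comm]; congr 1
  exact Finset.prod_congr rfl fun i _ => by ring

lemma qp_ne (q a : ℂ) (k : ℕ) (h : ∀ i < k, (1:ℂ) - a * q ^ i ≠ 0) : qp q a k ≠ 0 :=
  Finset.prod_ne_zero_iff.2 fun i hi => h i (Finset.mem_range.1 hi)

/-- The evaluation `₂φ₁(q^{-m}, b; 0; q, q) = b^m` (limit case of q-Chu–Vandermonde). -/
lemma key (q : ℂ) (hq0 : q ≠ 0) (hq : ∀ n : ℕ, (1 : ℂ) - q ^ (n+1) ≠ 0) (b : ℂ) (m : ℕ) :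
    ∑ k ∈ Finset.range (m+1), qp q (q ^ (-(m:ℤ))) k * qp q b k * q ^ k / qp q q k = b ^ m := by
  induction m generalizing b with
  | zero => simp [qp]
  | succ m ih =>
    have hQ : ∀ k, qp q q k ≠ 0 := by
      intro k
      refine qp_ne _ _ _ fun i _ => ?_
      have := hq i
      rwa [pow_succ'] at this
    set g : ℕ → ℂ := fun k => qp q (q ^ (-(m:ℤ))) k * qp q b k * q ^ k / qp q q k with hg
    set h : ℕ → ℂ := fun k => q ^ (-(k:ℤ)) * g k with hh
    have hS : ∑ k ∈ Finset.range (m+1), g k = b ^ m := ih b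
    have hgm1 : g (m+1) = 0 := by
      have hz : qp q (q ^ (-(m:ℤ))) (m+1) = 0 := by
        rw [qp_succ]
        have : q ^ (-(m:ℤ)) * q ^ m = 1 := by
          rw [zpow_neg, zpow_natCast]
          exact inv_mul_cancel₀ (pow_ne_zero _ hq0)
        rw [this]; ring
      simp only [hg]
      rw [hz, zero_mul, zero_mul, zero_div]
    -- termwise identity
    have hterm : ∀ j, qp q (q ^ (-((m+1:ℕ)):ℤ)) (j+1) * qp q b (j+1) * q ^ (j+1) / qp q q (j+1)
        = h (j+1) - (q ^ (-(j:ℤ)) - b) * g j := by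
      intro j
      have e1 : q ^ (-((m+1:ℕ)):ℤ) = q ^ (-(m:ℤ)) * q⁻¹ := by
        push_cast
        rw [neg_add, zpow_add₀ hq0, zpow_neg_one]
      have e2 : q ^ (-((j+1:ℕ)):ℤ) = (q ^ j)⁻¹ * q⁻¹ := by
        push_cast
        rw [neg_add, zpow_add₀ hq0, zpow_neg_one, zpow_neg, zpow_natCast]
      have e3 : q ^ (-(j:ℤ)) = (q ^ j)⁻¹ := by rw [zpow_neg, zpow_natCast]
      have e4 : qp q (q ^ (-((m+1:ℕ)):ℤ)) (j+1)
          = (1 - q ^ (-(m:ℤ)) * q⁻¹) * qp q (q ^ (-(m:ℤ))) j := by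
        rw [qp_succ', e1]
        congr 2
        rw [mul_assoc, inv_mul_cancel₀ hq0, mul_one]
      have hQj := hQ j
      have hq1j : (1 : ℂ) - q * q ^ j ≠ 0 := by
        have := hq j; rwa [pow_succ'] at this
      have hZ : (q : ℂ) ^ j ≠ 0 := pow_ne_zero _ hq0
      simp only [hh, hg, e4, e2, e3, qp_succ, pow_succ]
      set u := q ^ (-(m:ℤ)) with hu
      set Z := q ^ j with hZdef
      set P := qp q u j with hP
      set B := qp q b j with hB
      set Q := qp q q j with hQd
      field_simp
      ring
    rw [Finset.sum_range_succ']
    have f0 : qp q (q ^ (-((m+1:ℕ)):ℤ)) 0 * qp q b 0 * q ^ 0 / qp q q 0 = 1 := by simp [qp]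
    rw [f0]
    have hrw : ∑ j ∈ Finset.range (m+1),
        qp q (q ^ (-((m+1:ℕ)):ℤ)) (j+1) * qp q b (j+1) * q ^ (j+1) / qp q q (j+1)
        = ∑ j ∈ Finset.range (m+1), (h (j+1) - (q ^ (-(j:ℤ)) - b) * g j) :=
      Finset.sum_congr rfl fun j _ => hterm j
    rw [hrw, Finset.sum_sub_distrib]
    have hA : ∑ j ∈ Finset.range (m+1), h (j+1)
        = ∑ k ∈ Finset.range (m+1), h k - 1 := by
      have e : ∑ k ∈ Finset.range (m+2), h k = ∑ j ∈ Finset.range (m+1), h (j+1) + h 0 :=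
        Finset.sum_range_succ' h (m+1)
      have h0 : h 0 = 1 := by simp [hh, hg, qp]
      have htop : ∑ k ∈ Finset.range (m+2), h k = ∑ k ∈ Finset.range (m+1), h k := by
        rw [Finset.sum_range_succ, hh]
        simp [hgm1]
      rw [htop, h0] at e
      linear_combination -e
    have hB2 : ∑ j ∈ Finset.range (m+1), (q ^ (-(j:ℤ)) - b) * g j
        = (∑ k ∈ Finset.range (m+1), h k) - b * b ^ m := by
      rw [← hS, Finset.mul_sum, ← Finset.sum_sub_distrib]
      exact Finset.sum_congr rfl fun j _ => by simp only [hh]; ring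
    rw [hA, hB2]
    ring

/-- Evaluation `S_m(½(q^{1/2}+q^{-1/2}); q^{1/2-p}, q^{1/2} | q) = q^{-m/2} (q^{1-p};q)_m`. -/
theorem stmt10 (q : ℝ) (hq0 : 0 < q) (hq1 : q < 1) (m : ℕ) (p : ℤ) :
    ASC q ((Real.sqrt q : ℂ) * (q : ℂ) ^ (-p)) (Real.sqrt q : ℂ) (Real.sqrt q : ℂ) m =
      ((Real.sqrt q : ℂ)) ^ (-(m : ℤ)) * qp q ((q : ℂ) ^ (1 - p)) m := by
  set qc : ℂ := (q : ℂ) with hqc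
  set s : ℂ := (Real.sqrt q : ℂ) with hs
  have hqC : qc ≠ 0 := by
    simp only [hqc, ne_eq, Complex.ofReal_eq_zero]
    exact hq0.ne'
  have hs2 : s * s = qc := by
    rw [hs, hqc, ← Complex.ofReal_mul, Real.mul_self_sqrt hq0.le]
  have hs0 : s ≠ 0 := by
    simp only [hs, ne_eq, Complex.ofReal_eq_zero]
    exact (Real.sqrt_pos.2 hq0).ne'
  have hone : ∀ z : ℤ, z ≠ 0 → (1:ℂ) - qc ^ z ≠ 0 := by
    intro z hz
    have h : (q:ℝ)^z ≠ 1 := by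
      rcases hz.lt_or_gt with h|h
      · have : 1 < (q:ℝ)^z := one_lt_zpow_of_neg₀ hq0 hq1 h
        linarith
      · have : (q:ℝ)^z < 1 := zpow_lt_one₀ hq0 hq1 h
        linarith
    rw [sub_ne_zero]
    intro hc
    apply h
    have := Complex.ofReal_zpow q z
    rw [hqc, ← this] at hc
    exact_mod_cast hc.symm
  have hq' : ∀ n : ℕ, (1:ℂ) - qc ^ (n+1) ≠ 0 := by
    intro n
    have := hone ((n:ℤ)+1) (by omega)
    rwa [show ((n:ℤ)+1) = ((n+1 : ℕ) : ℤ) by push_cast; ring, zpow_natCast] at this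
  have hQ : ∀ k : ℕ, qp qc qc k ≠ 0 := by
    intro k
    refine qp_ne _ _ _ fun i _ => ?_
    have := hq' i
    rwa [pow_succ'] at this
  have hab : (s * qc ^ (-p)) * s = qc ^ (1-p) := by
    have : (s * qc ^ (-p)) * s = (s * s) * qc ^ (-p) := by ring
    rw [this, hs2, sub_eq_add_neg, zpow_add₀ hqC, zpow_one]
  have hdiv : (s * qc ^ (-p)) / s = qc ^ (-p) := by
    rw [mul_comm, mul_div_assoc, div_self hs0, mul_one]
  rw [ASC, hab, hdiv]
  by_cases hcase : 0 < p ∧ p ≤ (m:ℤ)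
  · obtain ⟨hp1, hp2⟩ := hcase
    have hz : qp qc (qc ^ (1-p)) m = 0 := by
      apply Finset.prod_eq_zero (i := (p-1).toNat) (Finset.mem_range.2 (by omega))
      have h1 : (((p-1).toNat : ℕ) : ℤ) = p - 1 := Int.toNat_of_nonneg (by omega)
      rw [← zpow_natCast qc ((p-1).toNat), h1, ← zpow_add₀ hqC]
      norm_num
    rw [hz]
    ring
  · have hk : ∀ k ≤ m, qp qc (qc ^ (1-p)) k ≠ 0 := by
      intro k hkm
      refine qp_ne _ _ _ fun i hi => ?_
      rw [← zpow_natCast qc i, ← zpow_add₀ hqC]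
      exact hone (1 - p + i) (by omega)
    have hsum : ∑ k ∈ Finset.range (m+1),
        qp qc (qc ^ (-(m:ℤ))) k * qp qc (qc ^ (1-p)) k * qp qc (qc ^ (-p)) k /
          (qp qc qc k * qp qc (qc ^ (1-p)) k) * qc ^ k
        = ∑ k ∈ Finset.range (m+1),
          qp qc (qc ^ (-(m:ℤ))) k * qp qc (qc ^ (-p)) k * qc ^ k / qp qc qc k := by
      refine Finset.sum_congr rfl fun k hk' => ?_
      have h1 := hk k (Nat.lt_succ_iff.1 (Finset.mem_range.1 hk'))
      have h2 := hQ k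
      field_simp
    rw [hsum, key qc hqC hq' (qc ^ (-p)) m]
    have hfin : (s * qc ^ (-p)) ^ (-(m:ℤ)) * (qc ^ (-p)) ^ m = s ^ (-(m:ℤ)) := by
      rw [mul_zpow, ← zpow_natCast (qc ^ (-p)) m, ← zpow_mul, ← zpow_mul, mul_assoc,
        ← zpow_add₀ hqC]
      norm_num
    calc (s * qc ^ (-p)) ^ (-(m:ℤ)) * qp qc (qc ^ (1-p)) m * (qc ^ (-p)) ^ m
        = ((s * qc ^ (-p)) ^ (-(m:ℤ)) * (qc ^ (-p)) ^ m) * qp qc (qc ^ (1-p)) m := by ring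
      _ = s ^ (-(m:ℤ)) * qp qc (qc ^ (1-p)) m := by rw [hfin]
end

section
/- The q-gamma function Γ_q(x) = (q;q)_∞ (q^x;q)_∞^{-1} (1-q)^{1-x} satisfies lim_{q↑1} Γ_q(x) = Γ(x) for every real x > 0. -/
open Filter

open Real Set in
private noncomputable def qF (a c : ℝ) (s : ℝ) : ℝ := Real.log (1 - a * Real.exp (-(c * s)))

open Real Set in
private noncomputable def tq (x : ℝ) (n : ℕ) (q : ℝ) : ℝ :=
  x * (Real.log (1 - q ^ ((n:ℝ)+2)) - Real.log (1 - q ^ ((n:ℝ)+1)))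
    - (Real.log (1 - q ^ ((n:ℝ)+1+x)) - Real.log (1 - q ^ ((n:ℝ)+1)))

open Real Set in
private noncomputable def tlim (x : ℝ) (n : ℕ) : ℝ :=
  x * (Real.log ((n:ℝ)+2) - Real.log ((n:ℝ)+1))
    - (Real.log ((n:ℝ)+1+x) - Real.log ((n:ℝ)+1))

open Real Set in
private noncomputable def qP (x : ℝ) (N : ℕ) : ℝ :=
  ((N:ℝ)+1) ^ x * ∏ n ∈ Finset.range N, (((n:ℝ)+1)/((n:ℝ)+1+x))

section Aux
open Real Set

private lemma qF_den_pos {a c : ℝ} (ha0 : 0 < a) (ha1 : a < 1) (hc : 0 < c) {s : ℝ}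
    (hs : 0 ≤ s) : 0 < 1 - a * Real.exp (-(c * s)) := by
  have h1 : Real.exp (-(c * s)) ≤ 1 := by
    rw [Real.exp_le_one_iff]
    nlinarith [mul_nonneg hc.le hs]
  nlinarith [Real.exp_pos (-(c * s))]

private lemma qF_hasDeriv1 {a c : ℝ} (ha0 : 0 < a) (ha1 : a < 1) (hc : 0 < c) {s : ℝ}
    (hs : 0 ≤ s) :
    HasDerivAt (qF a c) (a * c * Real.exp (-(c * s)) / (1 - a * Real.exp (-(c * s)))) s := by
  have h1 : HasDerivAt (fun s : ℝ => -(c * s)) (-c) s := by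
    have := ((hasDerivAt_id s).const_mul c).neg
    simp only [mul_one] at this
    exact this
  have h2 : HasDerivAt (fun s : ℝ => 1 - a * Real.exp (-(c * s)))
      (a * c * Real.exp (-(c * s))) s := by
    have := ((h1.exp).const_mul a).const_sub 1
    refine this.congr_deriv ?_
    ring
  exact h2.log (ne_of_gt (qF_den_pos ha0 ha1 hc hs))

private lemma qF_hasDeriv2 {a c : ℝ} (ha0 : 0 < a) (ha1 : a < 1) (hc : 0 < c) {s : ℝ}
    (hs : 0 ≤ s) :
    HasDerivAt (fun s => a * c * Real.exp (-(c * s)) / (1 - a * Real.exp (-(c * s))))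
      (-(a * c ^ 2 * Real.exp (-(c * s))) / (1 - a * Real.exp (-(c * s))) ^ 2) s := by
  have h1 : HasDerivAt (fun s : ℝ => -(c * s)) (-c) s := by
    have := ((hasDerivAt_id s).const_mul c).neg
    simp only [mul_one] at this
    exact this
  have hnum : HasDerivAt (fun s : ℝ => a * c * Real.exp (-(c * s)))
      (a * c * Real.exp (-(c * s)) * (-c)) s := by
    simpa [mul_assoc, mul_comm, mul_left_comm] using (h1.exp).const_mul (a * c)
  have hden : HasDerivAt (fun s : ℝ => 1 - a * Real.exp (-(c * s)))
      (a * c * Real.exp (-(c * s))) s := by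
    have := ((h1.exp).const_mul a).const_sub 1
    refine this.congr_deriv ?_; ring
  have hd := hnum.div hden (ne_of_gt (qF_den_pos ha0 ha1 hc hs))
  refine hd.congr_deriv ?_
  field_simp
  ring

private lemma qF2_bound {a c : ℝ} (ha0 : 0 < a) (ha1 : a < 1) (hc : 0 < c) {s : ℝ}
    (hs : 0 ≤ s) :
    ‖-(a * c ^ 2 * Real.exp (-(c * s))) / (1 - a * Real.exp (-(c * s))) ^ 2‖
      ≤ c ^ 2 * a / (1 - a) ^ 2 := by
  have he1 : Real.exp (-(c * s)) ≤ 1 := by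
    rw [Real.exp_le_one_iff]; nlinarith [mul_nonneg hc.le hs]
  have he0 : 0 < Real.exp (-(c * s)) := Real.exp_pos _
  have hd : 1 - a ≤ 1 - a * Real.exp (-(c * s)) := by nlinarith
  have hd0 : 0 < 1 - a := by linarith
  rw [Real.norm_eq_abs, abs_div, abs_neg]
  rw [abs_of_nonneg (by positivity), abs_of_nonneg (by positivity)]
  apply div_le_div₀ (by positivity) (by nlinarith) (by positivity) (by nlinarith)

private lemma sinh_aux {s : ℝ} (hs : 0 < s) : s * Real.exp (-(s / 2)) ≤ 1 - Real.exp (-s) := by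
  have h := (Real.self_lt_sinh_iff.mpr (by linarith : (0:ℝ) < s / 2)).le
  rw [Real.sinh_eq] at h
  have he : Real.exp (-(s/2)) > 0 := Real.exp_pos _
  have key : s ≤ Real.exp (s/2) - Real.exp (-(s/2)) := by linarith
  have := mul_le_mul_of_nonneg_right key he.le
  calc s * Real.exp (-(s/2)) ≤ (Real.exp (s/2) - Real.exp (-(s/2))) * Real.exp (-(s/2)) := this
    _ = 1 - Real.exp (-s) := by
        rw [sub_mul, ← Real.exp_add, ← Real.exp_add]
        rw [show s/2 + -(s/2) = 0 by ring, show -(s/2) + -(s/2) = -s by ring, Real.exp_zero]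

private lemma key_bound {c : ℝ} (hc : 0 < c) (m : ℝ) (hm : 0 < m) :
    c ^ 2 * Real.exp (-(m * c)) / (1 - Real.exp (-(m * c))) ^ 2 ≤ 1 / m ^ 2 := by
  set s := m * c with hs
  have hs0 : 0 < s := mul_pos hm hc
  have hlt1 : Real.exp (-s) < 1 := Real.exp_lt_one_iff.mpr (by linarith)
  have h1 : s * Real.exp (-(s / 2)) ≤ 1 - Real.exp (-s) := sinh_aux hs0
  have h1' : 0 ≤ s * Real.exp (-(s/2)) := by positivity
  have hsq : (s * Real.exp (-(s/2))) ^ 2 ≤ (1 - Real.exp (-s)) ^ 2 := by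
    apply pow_le_pow_left₀ h1' h1
  have hexp : (s * Real.exp (-(s/2))) ^ 2 = s ^ 2 * Real.exp (-s) := by
    rw [mul_pow, sq (Real.exp _), ← Real.exp_add, show -(s/2) + -(s/2) = -s by ring]
  rw [hexp] at hsq
  have hpos : 0 < (1 - Real.exp (-s)) ^ 2 := pow_pos (by linarith) 2
  rw [div_le_div_iff₀ hpos (by positivity)]
  have heq : c ^ 2 * Real.exp (-s) * m ^ 2 = s ^ 2 * Real.exp (-s) := by rw [hs]; ring
  linarith [hsq]

private lemma qF_diff_bound {a c x : ℝ} (ha0 : 0 < a) (ha1 : a < 1) (hc : 0 < c)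
    (hx : 0 < x) :
    |x * (qF a c 1 - qF a c 0) - (qF a c x - qF a c 0)|
      ≤ 2 * x * max 1 x * (c ^ 2 * a / (1 - a) ^ 2) := by
  set K := c ^ 2 * a / (1 - a) ^ 2 with hK
  have hK0 : 0 ≤ K := by
    have : (0:ℝ) < 1 - a := by linarith
    positivity
  set M := max 1 x with hM
  have hM1 : (1:ℝ) ≤ M := le_max_left _ _
  have hMx : x ≤ M := le_max_right _ _
  have hM0 : (0:ℝ) < M := lt_of_lt_of_le one_pos hM1
  set F1 : ℝ → ℝ := fun s => a * c * Real.exp (-(c * s)) / (1 - a * Real.exp (-(c * s)))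
    with hF1
  have hIcc : Convex ℝ (Icc (0:ℝ) M) := convex_Icc _ _
  have step1 : ∀ s ∈ Icc (0:ℝ) M, ‖F1 s - F1 0‖ ≤ K * M := by
    intro s hs
    have h := hIcc.norm_image_sub_le_of_norm_hasDerivWithin_le
      (f := F1) (f' := fun s => -(a * c ^ 2 * Real.exp (-(c * s))) / (1 - a * Real.exp (-(c * s))) ^ 2)
      (fun y hy => (qF_hasDeriv2 ha0 ha1 hc hy.1).hasDerivWithinAt)
      (fun y hy => qF2_bound ha0 ha1 hc hy.1) (left_mem_Icc.mpr hM0.le) hs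
    calc ‖F1 s - F1 0‖ ≤ K * ‖s - 0‖ := h
      _ = K * s := by rw [sub_zero, Real.norm_eq_abs, abs_of_nonneg hs.1]
      _ ≤ K * M := by exact mul_le_mul_of_nonneg_left hs.2 hK0
  have step2 : ∀ s ∈ Icc (0:ℝ) M, |qF a c s - qF a c 0 - s * F1 0| ≤ K * M * s := by
    intro s hs
    have h := hIcc.norm_image_sub_le_of_norm_hasDerivWithin_le
      (f := fun s => qF a c s - s * F1 0) (f' := fun s => F1 s - F1 0)
      (fun y hy => ((qF_hasDeriv1 ha0 ha1 hc hy.1).sub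
        (hasDerivAt_mul_const (F1 0))).hasDerivWithinAt)
      (fun y hy => step1 y hy) (left_mem_Icc.mpr hM0.le) hs
    have : ‖qF a c s - s * F1 0 - (qF a c 0 - 0 * F1 0)‖ ≤ K * M * ‖s - 0‖ := h
    rw [sub_zero, Real.norm_eq_abs, Real.norm_eq_abs, abs_of_nonneg hs.1] at this
    calc |qF a c s - qF a c 0 - s * F1 0| = |qF a c s - s * F1 0 - (qF a c 0 - 0 * F1 0)| := by
          ring_nf
      _ ≤ K * M * s := this
  have h1 := step2 1 ⟨zero_le_one, hM1⟩
  have h2 := step2 x ⟨hx.le, hMx⟩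
  have key : x * (qF a c 1 - qF a c 0) - (qF a c x - qF a c 0)
      = x * (qF a c 1 - qF a c 0 - 1 * F1 0) - (qF a c x - qF a c 0 - x * F1 0) := by ring
  rw [key]
  calc |x * (qF a c 1 - qF a c 0 - 1 * F1 0) - (qF a c x - qF a c 0 - x * F1 0)|
      ≤ |x * (qF a c 1 - qF a c 0 - 1 * F1 0)| + |qF a c x - qF a c 0 - x * F1 0| :=
        abs_sub _ _
    _ ≤ x * (K * M * 1) + K * M * x := by
        rw [abs_mul, abs_of_nonneg hx.le]
        exact add_le_add (mul_le_mul_of_nonneg_left h1 hx.le) h2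
    _ = 2 * x * M * K := by ring

private lemma tq_bound {x : ℝ} (hx : 0 < x) (n : ℕ) {q : ℝ} (hq : q ∈ Ioo (0:ℝ) 1) :
    |tq x n q| ≤ 2 * x * max 1 x * (1 / ((n:ℝ)+1) ^ 2) := by
  obtain ⟨hq0, hq1⟩ := hq
  set c := -Real.log q with hc
  have hc0 : 0 < c := by
    have := Real.log_neg hq0 hq1
    linarith
  set m := (n:ℝ) + 1 with hm
  have hm0 : 0 < m := by positivity
  set a := Real.exp (-(m * c)) with ha
  have ha0 : 0 < a := Real.exp_pos _
  have ha1 : a < 1 := by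
    rw [ha, Real.exp_lt_one_iff]
    nlinarith
  have hrw : ∀ s : ℝ, q ^ (m + s) = a * Real.exp (-(c * s)) := by
    intro s
    rw [Real.rpow_def_of_pos hq0, ha, ← Real.exp_add]
    congr 1
    rw [hc]; ring
  have htq : tq x n q = x * (qF a c 1 - qF a c 0) - (qF a c x - qF a c 0) := by
    have e1 : qF a c 1 = Real.log (1 - q ^ ((n:ℝ)+2)) := by
      rw [qF, ← hrw, hm]; ring_nf
    have e0 : qF a c 0 = Real.log (1 - q ^ ((n:ℝ)+1)) := by
      rw [qF, ← hrw, hm]; ring_nf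
    have ex : qF a c x = Real.log (1 - q ^ ((n:ℝ)+1+x)) := by
      rw [qF, ← hrw, hm]
    rw [tq, e1, e0, ex]
  rw [htq]
  calc |x * (qF a c 1 - qF a c 0) - (qF a c x - qF a c 0)|
      ≤ 2 * x * max 1 x * (c ^ 2 * a / (1 - a) ^ 2) := qF_diff_bound ha0 ha1 hc0 hx
    _ ≤ 2 * x * max 1 x * (1 / m ^ 2) := by
        apply mul_le_mul_of_nonneg_left _ (by positivity)
        rw [ha]
        exact key_bound hc0 m hm0

private lemma ratio_tendsto {a : ℝ} (ha : 0 < a) :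
    Tendsto (fun q : ℝ => (1 - q ^ a) / (1 - q)) (nhdsWithin 1 (Ioo (0:ℝ) 1)) (nhds a) := by
  have hd : HasDerivAt (fun y : ℝ => y ^ a) a 1 := by
    have := Real.hasDerivAt_rpow_const (x := 1) (p := a) (Or.inl one_ne_zero)
    simpa using this
  have hslope := hasDerivAt_iff_tendsto_slope.mp hd
  have hsub : nhdsWithin (1:ℝ) (Ioo (0:ℝ) 1) ≤ nhdsWithin 1 {(1:ℝ)}ᶜ := by
    apply nhdsWithin_mono
    intro y hy
    exact ne_of_lt hy.2
  have := hslope.mono_left hsub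
  apply this.congr'
  filter_upwards [self_mem_nhdsWithin] with q hq
  have hq1 : q - 1 ≠ 0 := by
    have := hq.2; intro h; apply absurd this; push_neg; nlinarith [sub_eq_zero.mp h]
  rw [slope_def_field]
  rw [div_eq_div_iff (by intro h; apply hq1; linarith [sub_eq_zero.mp h]) ?_]
  · ring_nf
    rw [Real.one_rpow]
    ring
  · intro h
    apply hq1
    linarith [sub_eq_zero.mp h]

private lemma log_ratio_tendsto {a : ℝ} (ha : 0 < a) :
    Tendsto (fun q : ℝ => Real.log ((1 - q ^ a) / (1 - q)))
      (nhdsWithin 1 (Ioo (0:ℝ) 1)) (nhds (Real.log a)) :=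
  (ratio_tendsto ha).log (ne_of_gt ha)

private lemma tq_tendsto {x : ℝ} (hx : 0 < x) (n : ℕ) :
    Tendsto (tq x n) (nhdsWithin 1 (Ioo (0:ℝ) 1)) (nhds (tlim x n)) := by
  have h2 := log_ratio_tendsto (a := (n:ℝ)+2) (by positivity)
  have h1 := log_ratio_tendsto (a := (n:ℝ)+1) (by positivity)
  have hxx := log_ratio_tendsto (a := (n:ℝ)+1+x) (by positivity)
  have hcomb := ((h2.sub h1).const_mul x).sub (hxx.sub h1)
  apply hcomb.congr'
  filter_upwards [self_mem_nhdsWithin] with q hq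
  obtain ⟨hq0, hq1⟩ := hq
  have h1q : 0 < 1 - q := by linarith
  have hlog : ∀ b : ℝ, 0 < b →
      Real.log ((1 - q ^ b) / (1 - q)) = Real.log (1 - q ^ b) - Real.log (1 - q) := by
    intro b hb
    have hqb : q ^ b < 1 := Real.rpow_lt_one hq0.le hq1 hb
    rw [Real.log_div (by linarith) (by linarith)]
  rw [tq, hlog _ (by positivity : (0:ℝ) < (n:ℝ)+2), hlog _ (by positivity : (0:ℝ) < (n:ℝ)+1),
    hlog _ (by positivity : (0:ℝ) < (n:ℝ)+1+x)]
  ring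

private lemma rpow_lt_one' {q b : ℝ} (hq0 : 0 < q) (hq1 : q < 1) (hb : 0 < b) :
    q ^ b < 1 := Real.rpow_lt_one hq0.le hq1 hb

private lemma summable_logq {q : ℝ} (hq0 : 0 < q) (hq1 : q < 1) {b : ℝ} (hb : 0 < b) :
    Summable (fun n : ℕ => Real.log (1 - q ^ (b + (n:ℝ)))) := by
  have hqb : q ^ b < 1 := rpow_lt_one' hq0 hq1 hb
  have hqb0 : 0 < q ^ b := Real.rpow_pos_of_pos hq0 b
  have hgeo : Summable (fun n : ℕ => q ^ b / (1 - q ^ b) * q ^ n) :=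
    (summable_geometric_of_lt_one hq0.le hq1).mul_left _
  have key : Summable (fun n : ℕ => -Real.log (1 - q ^ (b + (n:ℝ)))) := by
    apply Summable.of_nonneg_of_le _ _ hgeo
    · intro n
      have h1 : q ^ (b + (n:ℝ)) < 1 :=
        rpow_lt_one' hq0 hq1 (by positivity)
      have h0 : 0 < q ^ (b + (n:ℝ)) := Real.rpow_pos_of_pos hq0 _
      simp only [neg_nonneg]
      exact Real.log_nonpos (by linarith) (by linarith)
    · intro n
      set y := q ^ (b + (n:ℝ)) with hy
      have hy0 : 0 < y := Real.rpow_pos_of_pos hq0 _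
      have hyb : y ≤ q ^ b := by
        rw [hy]
        apply Real.rpow_le_rpow_of_exponent_ge hq0 hq1.le
        simp
      have hy1 : y < 1 := lt_of_le_of_lt hyb hqb
      have h1y : 0 < 1 - y := by linarith
      have hlog : -Real.log (1 - y) ≤ y / (1 - y) := by
        rw [← Real.log_inv]
        calc Real.log (1 - y)⁻¹ ≤ (1 - y)⁻¹ - 1 := Real.log_le_sub_one_of_pos (by positivity)
          _ = y / (1 - y) := by field_simp; ring
      refine hlog.trans ?_
      have hyq : y = q ^ b * q ^ n := by
        rw [hy, Real.rpow_add hq0, Real.rpow_natCast]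
      have h1b : 0 < 1 - q ^ b := by linarith
      calc y / (1 - y) ≤ y / (1 - q ^ b) :=
            div_le_div_of_nonneg_left hy0.le h1b (by linarith)
        _ = q ^ b / (1 - q ^ b) * q ^ n := by rw [hyq]; ring
  simpa using key.neg

private lemma tprod_eq_exp_tsum {f : ℕ → ℝ} (hf : ∀ n, 0 < f n)
    (hs : Summable fun n => Real.log (f n)) :
    (∏' n, f n) = Real.exp (∑' n, Real.log (f n)) := by
  have h : HasProd f (Real.exp (∑' n, Real.log (f n))) := by
    have ht := hs.hasSum
    have := (Real.continuous_exp.continuousAt (x := ∑' n, Real.log (f n))).tendsto.comp ht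
    apply Tendsto.congr _ this
    intro s
    rw [Function.comp_apply, Real.exp_sum]
    exact Finset.prod_congr rfl fun i _ => Real.exp_log (hf i)
  exact h.tprod_eq

private lemma sum_tlim {x : ℝ} (hx : 0 < x) (N : ℕ) :
    ∑ n ∈ Finset.range N, tlim x n = Real.log (qP x N) := by
  have hsum : ∑ n ∈ Finset.range N, tlim x n
      = x * Real.log ((N:ℝ)+1)
        + ∑ n ∈ Finset.range N, (Real.log ((n:ℝ)+1) - Real.log ((n:ℝ)+1+x)) := by
    have htel : ∑ n ∈ Finset.range N,
        (Real.log (((n:ℝ))+2) - Real.log ((n:ℝ)+1)) = Real.log ((N:ℝ)+1) := by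
      have h0 := Finset.sum_range_sub (fun k : ℕ => Real.log ((k:ℝ)+1)) N
      simp only [Nat.cast_zero, zero_add, Real.log_one, sub_zero] at h0
      rw [← h0]
      apply Finset.sum_congr rfl
      intro n _
      congr 2
      push_cast; ring
    calc ∑ n ∈ Finset.range N, tlim x n
        = x * (∑ n ∈ Finset.range N, (Real.log ((n:ℝ)+2) - Real.log ((n:ℝ)+1)))
          + ∑ n ∈ Finset.range N, (Real.log ((n:ℝ)+1) - Real.log ((n:ℝ)+1+x)) := by
          rw [Finset.mul_sum, ← Finset.sum_add_distrib]
          apply Finset.sum_congr rfl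
          intro n _
          rw [tlim]; ring
      _ = x * Real.log ((N:ℝ)+1)
          + ∑ n ∈ Finset.range N, (Real.log ((n:ℝ)+1) - Real.log ((n:ℝ)+1+x)) := by
          rw [htel]
  rw [hsum, qP, Real.log_mul (by positivity) ?_, Real.log_rpow (by positivity),
    Real.log_prod]
  · congr 1
    apply Finset.sum_congr rfl
    intro n _
    rw [Real.log_div (by positivity) (by positivity)]
  · intro n _
    positivity
  · positivity

private lemma qP_eq {x : ℝ} (hx : 0 < x) {N : ℕ} (hN : 1 ≤ N) :
    qP x N = x * Real.GammaSeq x N * (((N:ℝ)+1)/(N:ℝ)) ^ x := by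
  have hN0 : 0 < (N:ℝ) := by exact_mod_cast hN
  have hprod : ∏ j ∈ Finset.range (N+1), (x + (j:ℝ))
      = (∏ j ∈ Finset.range N, (x + ((j:ℝ)+1))) * x := by
    have := Finset.prod_range_succ' (fun j : ℕ => (x + (j:ℝ))) N
    rw [this]
    norm_num
  have hfact : ((Nat.factorial N : ℕ) : ℝ) = ∏ n ∈ Finset.range N, ((n:ℝ)+1) := by
    rw [← Finset.prod_range_add_one_eq_factorial N, Nat.cast_prod]
    push_cast
    rfl
  have hdiv : (((N:ℝ)+1)/(N:ℝ)) ^ x = ((N:ℝ)+1) ^ x / (N:ℝ) ^ x :=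
    Real.div_rpow (by positivity) hN0.le x
  rw [Real.GammaSeq, hdiv, hprod, hfact, qP]
  have hppos : ∀ n ∈ Finset.range N, (0:ℝ) < x + ((n:ℝ)+1) := by
    intro n _; positivity
  have hP : (0:ℝ) < ∏ j ∈ Finset.range N, (x + ((j:ℝ)+1)) := Finset.prod_pos hppos
  rw [Finset.prod_div_distrib]
  have : ∏ n ∈ Finset.range N, ((n:ℝ)+1+x) = ∏ j ∈ Finset.range N, (x + ((j:ℝ)+1)) := by
    apply Finset.prod_congr rfl; intro j _; ring
  rw [this]
  have hNx : (0:ℝ) < (N:ℝ) ^ x := Real.rpow_pos_of_pos hN0 x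
  field_simp

private lemma qP_tendsto {x : ℝ} (hx : 0 < x) :
    Tendsto (qP x) atTop (nhds (x * Real.Gamma x)) := by
  have hrat : Tendsto (fun N : ℕ => (((N:ℝ)+1)/(N:ℝ)) ^ x) atTop (nhds 1) := by
    have hbase : Tendsto (fun N : ℕ => ((N:ℝ)+1)/(N:ℝ)) atTop (nhds 1) := by
      have h0 : Tendsto (fun N : ℕ => 1 + 1/(N:ℝ)) atTop (nhds 1) := by
        have := tendsto_one_div_atTop_nhds_zero_nat.const_add (1:ℝ)
        simpa using this
      apply h0.congr'
      filter_upwards [eventually_ge_atTop 1] with N hN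
      have : (N:ℝ) ≠ 0 := by positivity
      field_simp
    have := hbase.rpow_const (p := x) (Or.inl one_ne_zero)
    simpa [Real.one_rpow] using this
  have hmain : Tendsto (fun N : ℕ => x * Real.GammaSeq x N * (((N:ℝ)+1)/(N:ℝ)) ^ x)
      atTop (nhds (x * Real.Gamma x)) := by
    have := ((Real.GammaSeq_tendsto_Gamma x).const_mul x).mul hrat
    simpa using this
  apply hmain.congr'
  filter_upwards [eventually_ge_atTop 1] with N hN
  exact (qP_eq hx hN).symm

private lemma tlim_tsum {x : ℝ} (hx : 0 < x) (hs : Summable (tlim x)) :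
    ∑' n, tlim x n = Real.log (x * Real.Gamma x) := by
  have h1 := hs.hasSum.tendsto_sum_nat
  have h2 : Tendsto (fun N => ∑ n ∈ Finset.range N, tlim x n) atTop
      (nhds (Real.log (x * Real.Gamma x))) := by
    have hpos : x * Real.Gamma x ≠ 0 := by
      have := Real.Gamma_pos_of_pos hx
      positivity
    have := (qP_tendsto hx).log hpos
    apply this.congr'
    filter_upwards with N
    exact (sum_tlim hx N).symm
  exact tendsto_nhds_unique h1 h2

end Aux

/-- The q-gamma function `Γ_q(x) = (q;q)_∞ (q^x;q)_∞⁻¹ (1-q)^{1-x}` for `0 < q < 1`. -/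
noncomputable def qGamma (q x : ℝ) : ℝ :=
  (∏' i : ℕ, (1 - q * q ^ i)) / (∏' i : ℕ, (1 - q ^ x * q ^ i)) * (1 - q) ^ (1 - x)

section Main
open Real Set

private lemma qGamma_eq {x q : ℝ} (hx : 0 < x) (hq0 : 0 < q) (hq1 : q < 1) :
    qGamma q x = (1 - q) / (1 - q ^ x) * Real.exp (∑' n, tq x n q) := by
  have h1q : 0 < 1 - q := by linarith
  have h1qx : 0 < 1 - q ^ x := by
    have := rpow_lt_one' hq0 hq1 hx; linarith
  set f : ℕ → ℝ := fun n => Real.log (1 - q ^ ((n:ℝ)+1)) with hfdef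
  set g : ℕ → ℝ := fun n => Real.log (1 - q ^ ((n:ℝ)+1+x)) with hgdef
  have sf : Summable f := by
    apply (summable_logq hq0 hq1 one_pos).congr
    intro n; simp only [hfdef]; congr 2; ring
  have sg : Summable g := by
    apply (summable_logq hq0 hq1 (by linarith : (0:ℝ) < 1 + x)).congr
    intro n; simp only [hgdef]; congr 2; ring
  have sS2 : Summable (fun n : ℕ => Real.log (1 - q ^ (x + (n:ℝ)))) :=
    summable_logq hq0 hq1 hx
  set S1 := ∑' n, f n with hS1
  set S2 := ∑' n : ℕ, Real.log (1 - q ^ (x + (n:ℝ))) with hS2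
  set h : ℕ → ℝ := fun n => f (n+1) - f n with hhdef
  have sh : Summable h := ((summable_nat_add_iff 1).mpr sf).sub sf
  have hf_tendsto : Tendsto f atTop (nhds 0) := by
    have hpow : Tendsto (fun n : ℕ => q ^ ((n:ℝ)+1)) atTop (nhds 0) := by
      have := (tendsto_pow_atTop_nhds_zero_of_lt_one hq0.le hq1).const_mul q
      rw [mul_zero] at this
      apply this.congr
      intro n
      rw [Real.rpow_add hq0, Real.rpow_one, Real.rpow_natCast]; ring
    have := ((tendsto_const_nhds (x := (1:ℝ))).sub hpow).log (by norm_num)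
    simpa using this
  have tsum_h : ∑' n, h n = -f 0 := by
    have h1 := sh.hasSum.tendsto_sum_nat
    have h2 : Tendsto (fun N => ∑ n ∈ Finset.range N, h n) atTop (nhds (0 - f 0)) := by
      apply Tendsto.congr _ (hf_tendsto.sub_const (f 0))
      intro N
      exact (Finset.sum_range_sub f N).symm
    have := tendsto_nhds_unique h1 h2
    rw [this]; ring
  have tsum_g : ∑' n, g n = S2 - Real.log (1 - q ^ x) := by
    have h0 := sS2.tsum_eq_zero_add
    rw [hS2, h0]
    have h1 : ∑' (b : ℕ), Real.log (1 - q ^ (x + ((b+1:ℕ):ℝ))) = ∑' n, g n := by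
      apply tsum_congr; intro n; simp only [hgdef]; congr 2; push_cast; ring
    rw [h1]
    have h2 : q ^ (x + ((0:ℕ):ℝ)) = q ^ x := by norm_num
    rw [h2]; ring
  have tq_eq : ∀ n, tq x n q = x * h n + (f n - g n) := by
    intro n
    simp only [tq, hhdef, hfdef, hgdef]
    have : ((n+1:ℕ):ℝ) + 1 = (n:ℝ) + 2 := by push_cast; ring
    rw [this]; ring
  have sfg : Summable (fun n => f n - g n) := sf.sub sg
  have tsum_tq : ∑' n, tq x n q = x * (-f 0) + (S1 - (S2 - Real.log (1 - q ^ x))) := by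
    calc ∑' n, tq x n q = ∑' n, (x * h n + (f n - g n)) := tsum_congr tq_eq
      _ = (∑' n, x * h n) + ∑' n, (f n - g n) := Summable.tsum_add (sh.mul_left x) sfg
      _ = x * (∑' n, h n) + ((∑' n, f n) - ∑' n, g n) := by rw [tsum_mul_left, Summable.tsum_sub sf sg]
      _ = x * (-f 0) + (S1 - (S2 - Real.log (1 - q ^ x))) := by rw [tsum_h, tsum_g]
  have hf0 : f 0 = Real.log (1 - q) := by
    simp only [hfdef]
    norm_num
  have hnum : (∏' i : ℕ, (1 - q * q ^ i)) = Real.exp S1 := by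
    have hpos : ∀ i : ℕ, 0 < 1 - q * q ^ i := by
      intro i
      have h1 : q ^ i ≤ 1 := pow_le_one₀ hq0.le hq1.le
      have h2 : 0 < q ^ i := pow_pos hq0 i
      nlinarith
    have heq : ∀ i : ℕ, Real.log (1 - q * q ^ i) = f i := by
      intro i; simp only [hfdef]; congr 2
      rw [Real.rpow_add hq0, Real.rpow_one, Real.rpow_natCast]; ring
    have hsum : Summable fun i : ℕ => Real.log (1 - q * q ^ i) :=
      sf.congr (fun i => (heq i).symm)
    rw [tprod_eq_exp_tsum hpos hsum, hS1]
    congr 1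
    exact tsum_congr heq
  have hden : (∏' i : ℕ, (1 - q ^ x * q ^ i)) = Real.exp S2 := by
    have hqx1 : q ^ x < 1 := rpow_lt_one' hq0 hq1 hx
    have hqx0 : 0 < q ^ x := Real.rpow_pos_of_pos hq0 x
    have hpos : ∀ i : ℕ, 0 < 1 - q ^ x * q ^ i := by
      intro i
      have h1 : q ^ i ≤ 1 := pow_le_one₀ hq0.le hq1.le
      have h2 : 0 < q ^ i := pow_pos hq0 i
      nlinarith
    have heq : ∀ i : ℕ, Real.log (1 - q ^ x * q ^ i) = Real.log (1 - q ^ (x + (i:ℝ))) := by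
      intro i; congr 2
      rw [Real.rpow_add hq0, Real.rpow_natCast]
    have hsum : Summable fun i : ℕ => Real.log (1 - q ^ x * q ^ i) :=
      sS2.congr (fun i => (heq i).symm)
    rw [tprod_eq_exp_tsum hpos hsum, hS2]
    congr 1
    exact tsum_congr heq
  rw [qGamma, hnum, hden, tsum_tq, hf0]
  have lhs_eq : Real.exp S1 / Real.exp S2 * (1 - q) ^ (1 - x)
      = Real.exp (S1 - S2 + Real.log (1 - q) * (1 - x)) := by
    rw [Real.rpow_def_of_pos h1q, ← Real.exp_sub, ← Real.exp_add]
  have rhs_eq : Real.exp (Real.log (1 - q) - Real.log (1 - q ^ x)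
        + (x * (-Real.log (1 - q)) + (S1 - (S2 - Real.log (1 - q ^ x)))))
      = (1 - q) / (1 - q ^ x)
        * Real.exp (x * (-Real.log (1 - q)) + (S1 - (S2 - Real.log (1 - q ^ x)))) := by
    rw [Real.exp_add, Real.exp_sub, Real.exp_log h1q, Real.exp_log h1qx]
  rw [lhs_eq, ← rhs_eq]
  congr 1
  ring

end Main

/-- `Γ_q(x) → Γ(x)` as `q ↑ 1`, for every `x > 0`. -/
theorem stmt18 (x : ℝ) (hx : 0 < x) :
    Tendsto (fun q : ℝ => qGamma q x) (nhdsWithin 1 (Set.Ioo (0 : ℝ) 1))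
      (nhds (Real.Gamma x)) := by
  have hNB : (nhdsWithin (1:ℝ) (Set.Ioo (0:ℝ) 1)).NeBot := by
    apply mem_closure_iff_nhdsWithin_neBot.mp
    rw [closure_Ioo (by norm_num : (0:ℝ) ≠ 1)]
    exact ⟨zero_le_one, le_refl 1⟩
  haveI := hNB
  set B : ℕ → ℝ := fun n => 2 * x * max 1 x * (1/((n:ℝ)+1) ^ 2) with hBdef
  have hBsum : Summable B := by
    have h1 : Summable (fun n : ℕ => 1/((n:ℝ)+1) ^ 2) := by
      have h2 : Summable (fun n : ℕ => 1/((n:ℝ)) ^ 2) :=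
        Real.summable_one_div_nat_pow.mpr one_lt_two
      have h3 := (summable_nat_add_iff 1).mpr h2
      apply h3.congr
      intro n
      push_cast
      ring
    exact h1.mul_left _
  have hbd : ∀ᶠ q in nhdsWithin (1:ℝ) (Set.Ioo (0:ℝ) 1), ∀ n, ‖tq x n q‖ ≤ B n := by
    filter_upwards [self_mem_nhdsWithin] with q hq n
    rw [Real.norm_eq_abs]
    exact tq_bound hx n hq
  have hT := tendsto_tsum_of_dominated_convergence hBsum (fun n => tq_tendsto hx n) hbd
  have hsum_tlim : Summable (tlim x) := by
    apply Summable.of_norm_bounded hBsum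
    intro n
    apply le_of_tendsto (tq_tendsto hx n).norm
    filter_upwards [self_mem_nhdsWithin] with q hq
    rw [Real.norm_eq_abs]
    exact tq_bound hx n hq
  have hGpos : 0 < x * Real.Gamma x := mul_pos hx (Real.Gamma_pos_of_pos hx)
  have hexp : Tendsto (fun q => Real.exp (∑' n, tq x n q))
      (nhdsWithin (1:ℝ) (Set.Ioo (0:ℝ) 1)) (nhds (x * Real.Gamma x)) := by
    have := (Real.continuous_exp.continuousAt
      (x := ∑' n, tlim x n)).tendsto.comp hT
    rw [tlim_tsum hx hsum_tlim, Real.exp_log hGpos] at this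
    exact this
  have hratio : Tendsto (fun q : ℝ => (1-q)/(1-q ^ x))
      (nhdsWithin (1:ℝ) (Set.Ioo (0:ℝ) 1)) (nhds x⁻¹) := by
    have := (ratio_tendsto hx).inv₀ (ne_of_gt hx)
    apply this.congr'
    filter_upwards [self_mem_nhdsWithin] with q hq
    rw [inv_div]
  have hfinal := hratio.mul hexp
  have heq : x⁻¹ * (x * Real.Gamma x) = Real.Gamma x := by
    field_simp
  rw [heq] at hfinal
  apply hfinal.congr'
  filter_upwards [self_mem_nhdsWithin] with q hq
  exact (qGamma_eq hx hq.1 hq.2).symm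
end
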